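/- arXiv:2010.03219 — 2 statements merged into one kernel-verified Lean document; each statement's English description precedes it below -/
import Mathlib

section
/- Let G₁,…,G_k be pairwise disjoint connected graphs each of order at least 2, let G be their coalescence via vertices identified to a common vertex x, and suppose γ(G − x) < γ(G). Let H be a connected graph with no cut-vertices. If each Gᵢ is H-γ-excellent, then G is H-γ-excellent. -/
/-- The domination number of a finite simple graph. -/
noncomputable def gamma {V : Type*} [Fintype V] (G : SimpleGraph V) : ℕ :=
  sInf {k | ∃ D : Finset V, D.card = k ∧ ∀ v : V, v ∉ D → ∃ u ∈ D, G.Adj u v}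

/-- `D` is a minimum dominating set (γ-set) of `G`. -/
def IsGammaSet {V : Type*} [Fintype V] (G : SimpleGraph V) (D : Finset V) : Prop :=
  (∀ v : V, v ∉ D → ∃ u ∈ D, G.Adj u v) ∧ D.card = gamma G

/-- `G` is `H`-γ-excellent. -/
def HGammaExcellent {V W : Type*} [Fintype V] (G : SimpleGraph V) (H : SimpleGraph W) : Prop :=
  (∀ x : V, ∃ S : Set V, x ∈ S ∧ Nonempty (H ≃g G.induce S) ∧
      ∃ D : Finset V, IsGammaSet G D ∧ S ⊆ ↑D) ∧
  ∀ S : Set V, Nonempty (H ≃g G.induce S) → ∃ D : Finset V, IsGammaSet G D ∧ S ⊆ ↑D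

set_option linter.unusedSectionVars false
set_option maxHeartbeats 1000000

section Aux
variable {V : Type*} [Fintype V] (G : SimpleGraph V)

def DomOn (A : Set V) (D : Finset V) : Prop :=
  ↑D ⊆ A ∧ ∀ v ∈ A, v ∉ D → ∃ u ∈ D, G.Adj u v

noncomputable def gOn (A : Set V) : ℕ := sInf {n | ∃ D, DomOn G A D ∧ D.card = n}

lemma domOn_nonempty (A : Set V) : ∃ D, DomOn G A D := by
  classical
  refine ⟨A.toFinite.toFinset, ?_, ?_⟩
  · intro v hv; simpa using hv
  · intro v hv hv'; exact absurd (A.toFinite.mem_toFinset.2 hv) hv'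

lemma gOn_exists (A : Set V) : ∃ D, DomOn G A D ∧ D.card = gOn G A := by
  obtain ⟨D, hD⟩ := domOn_nonempty G A
  have : gOn G A ∈ {n | ∃ D, DomOn G A D ∧ D.card = n} := Nat.sInf_mem ⟨D.card, D, hD, rfl⟩
  exact this

lemma gOn_le {A : Set V} {D : Finset V} (h : DomOn G A D) : gOn G A ≤ D.card :=
  Nat.sInf_le ⟨D, h, rfl⟩

lemma gamma_exists : ∃ D, IsGammaSet G D := by
  have : gamma G ∈ {k | ∃ D : Finset V, D.card = k ∧ ∀ v : V, v ∉ D → ∃ u ∈ D, G.Adj u v} :=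
    Nat.sInf_mem ⟨Finset.univ.card, Finset.univ, rfl, fun v hv => absurd (Finset.mem_univ v) hv⟩
  obtain ⟨D, h1, h2⟩ := this
  exact ⟨D, h2, h1⟩

lemma gamma_le {D : Finset V} (h : ∀ v, v ∉ D → ∃ u ∈ D, G.Adj u v) : gamma G ≤ D.card :=
  Nat.sInf_le ⟨D, rfl, h⟩

lemma mem_map_subtype {A : Set V} {D' : Finset ↥A} {v : V} :
    v ∈ D'.map (Function.Embedding.subtype _) ↔ ∃ hv : v ∈ A, ⟨v, hv⟩ ∈ D' := by
  simp only [Finset.mem_map, Function.Embedding.coe_subtype]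
  constructor
  · rintro ⟨⟨u, hu⟩, hmem, rfl⟩; exact ⟨hu, hmem⟩
  · rintro ⟨hv, hmem⟩; exact ⟨⟨v, hv⟩, hmem, rfl⟩

lemma lift_gammaSet {A : Set V} [Fintype ↥A] {D' : Finset ↥A}
    (h : IsGammaSet (G.induce A) D') :
    DomOn G A (D'.map (Function.Embedding.subtype _)) ∧
      (D'.map (Function.Embedding.subtype _)).card = gamma (G.induce A) := by
  refine ⟨⟨Finset.map_subtype_subset _, ?_⟩, by rw [Finset.card_map, h.2]⟩
  intro v hv hvD
  have : (⟨v, hv⟩ : ↥A) ∉ D' := fun hc => hvD (mem_map_subtype.2 ⟨hv, hc⟩)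
  obtain ⟨u, huD, hadj⟩ := h.1 ⟨v, hv⟩ this
  exact ⟨u, mem_map_subtype.2 ⟨u.2, by simpa using huD⟩, hadj⟩

lemma gamma_induce (A : Set V) [Fintype ↥A] : gamma (G.induce A) = gOn G A := by
  classical
  apply le_antisymm
  · obtain ⟨D, hD, hcard⟩ := gOn_exists G A
    set D' : Finset ↥A := D.subtype (· ∈ A) with hD'
    have hmap : D'.map (Function.Embedding.subtype _) = D :=
      Finset.subtype_map_of_mem (fun y hy => hD.1 hy)
    have hcard' : D'.card = D.card := by rw [← hmap, Finset.card_map]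
    have : gamma (G.induce A) ≤ D'.card := by
      apply gamma_le
      intro v hvD'
      have hvD : (v : V) ∉ D := by
        intro hc
        exact hvD' (by simp [hD', Finset.mem_subtype, hc])
      obtain ⟨u, huD, hadj⟩ := hD.2 v v.2 hvD
      exact ⟨⟨u, hD.1 huD⟩, by simp [hD', Finset.mem_subtype, huD], hadj⟩
    omega
  · obtain ⟨D', hD'⟩ := gamma_exists (G.induce A)
    have h := lift_gammaSet G hD'
    have := gOn_le G h.1
    omega

noncomputable def induceInduceIso (A : Set V) (S' : Set ↥A) :
    (G.induce A).induce S' ≃g G.induce (Subtype.val '' S') where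
  toEquiv := Equiv.Set.image Subtype.val S' Subtype.val_injective
  map_rel_iff' := by intro a b; simp [Equiv.Set.image]; rfl

end Aux

/-- Coalescence: if `G` is the coalescence at `x` of connected graphs `G₁,…,G_k` each of order
at least 2 (given as the induced subgraphs on `P 1,…,P k`), `γ(G − x) < γ(G)`, `H` is connected
with no cut-vertices, and each `Gᵢ` is `H`-γ-excellent, then `G` is `H`-γ-excellent. -/
theorem coalescence_H_gamma_excellent {V W : Type*} [Fintype V] [DecidableEq V] [Fintype W]
    (G : SimpleGraph V) (k : ℕ) (hk : 1 ≤ k) (P : Fin k → Finset V) (x : V)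
    (hx : ∀ i, x ∈ P i)
    (hcover : ∀ v : V, ∃ i, v ∈ P i)
    (hpair : ∀ i j, i ≠ j → P i ∩ P j = {x})
    (hcard : ∀ i, 2 ≤ (P i).card)
    (hconn : ∀ i, (G.induce (↑(P i) : Set V)).Connected)
    (hedges : ∀ u v : V, G.Adj u v → ∃ i, u ∈ P i ∧ v ∈ P i)
    (H : SimpleGraph W) (hHconn : H.Connected)
    (hHnocut : ∀ w : W, (H.induce ({w}ᶜ : Set W)).Preconnected)
    (hγx : gamma (G.induce (↑(({x} : Finset V)ᶜ) : Set V)) < gamma G)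
    (hexc : ∀ i, HGammaExcellent (G.induce (↑(P i) : Set V)) H) :
    HGammaExcellent G H := by
  classical
  -- uniqueness of the block containing a vertex ≠ x
  have huniq : ∀ {v : V} {i j : Fin k}, v ≠ x → v ∈ P i → v ∈ P j → i = j := by
    intro v i j hv hi hj
    by_contra hne
    have hmem : v ∈ P i ∩ P j := Finset.mem_inter.2 ⟨hi, hj⟩
    rw [hpair i j hne] at hmem
    exact hv (Finset.mem_singleton.1 hmem)
  have hXmem : ∀ v : V, v ∈ (↑(({x} : Finset V)ᶜ) : Set V) ↔ v ≠ x := by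
    intro v; simp
  have hBmem : ∀ (j : Fin k) (v : V), v ∈ ((↑(P j) : Set V) \ {x}) ↔ v ∈ P j ∧ v ≠ x := by
    intro j v; simp
  -- choose minimum dominating sets of each G_j − x
  choose E hE hEcard using fun j : Fin k => gOn_exists G ((↑(P j) : Set V) \ {x})
  have hEdisj : ∀ i j : Fin k, i ≠ j → Disjoint (E i) (E j) := by
    intro i j hne
    rw [Finset.disjoint_left]
    intro u hui huj
    have h1 := (hBmem i u).1 ((hE i).1 hui)
    have h2 := (hBmem j u).1 ((hE j).1 huj)
    exact hne (huniq h1.2 h1.1 h2.1)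
  -- F1 : gOn of G − x equals the sum
  have hXsum : gOn G (↑(({x} : Finset V)ᶜ) : Set V) = ∑ j, gOn G ((↑(P j) : Set V) \ {x}) := by
    apply le_antisymm
    · have hdom : DomOn G (↑(({x} : Finset V)ᶜ) : Set V) (Finset.univ.biUnion E) := by
        constructor
        · intro u hu
          obtain ⟨j, _, huj⟩ := Finset.mem_biUnion.1 hu
          exact (hXmem u).2 ((hBmem j u).1 ((hE j).1 huj)).2
        · intro v hv hvD
          obtain ⟨i, hvi⟩ := hcover v
          have hvB : v ∈ ((↑(P i) : Set V) \ {x}) := (hBmem i v).2 ⟨hvi, (hXmem v).1 hv⟩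
          have hvE : v ∉ E i := fun hc => hvD (Finset.mem_biUnion.2 ⟨i, Finset.mem_univ i, hc⟩)
          obtain ⟨u, huE, hadj⟩ := (hE i).2 v hvB hvE
          exact ⟨u, Finset.mem_biUnion.2 ⟨i, Finset.mem_univ i, huE⟩, hadj⟩
      have := gOn_le G hdom
      rwa [Finset.card_biUnion (fun i _ j _ hne => hEdisj i j hne),
        Finset.sum_congr rfl (fun j _ => hEcard j)] at this
    · obtain ⟨D, hD, hDcard⟩ := gOn_exists G (↑(({x} : Finset V)ᶜ) : Set V)
      set F : Fin k → Finset V := fun j => D.filter (· ∈ P j) with hF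
      have hFdom : ∀ j, DomOn G ((↑(P j) : Set V) \ {x}) (F j) := by
        intro j
        constructor
        · intro u hu
          have := Finset.mem_filter.1 hu
          exact (hBmem j u).2 ⟨this.2, (hXmem u).1 (hD.1 this.1)⟩
        · intro v hv hvF
          obtain ⟨hvj, hvx⟩ := (hBmem j v).1 hv
          have hvD : v ∉ D := fun hc => hvF (Finset.mem_filter.2 ⟨hc, hvj⟩)
          obtain ⟨u, huD, hadj⟩ := hD.2 v ((hXmem v).2 hvx) hvD
          obtain ⟨l, hul, hvl⟩ := hedges u v hadj
          have : l = j := huniq hvx hvl hvj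
          subst this
          exact ⟨u, Finset.mem_filter.2 ⟨huD, hul⟩, hadj⟩
      have hDeq : D = Finset.univ.biUnion F := by
        ext u
        simp only [Finset.mem_biUnion, Finset.mem_univ, true_and, hF, Finset.mem_filter]
        constructor
        · intro hu; obtain ⟨j, hj⟩ := hcover u; exact ⟨j, hu, hj⟩
        · rintro ⟨j, hu, _⟩; exact hu
      have hFdisj : ∀ i ∈ Finset.univ, ∀ j ∈ Finset.univ, i ≠ j → Disjoint (F i) (F j) := by
        intro i _ j _ hne
        rw [Finset.disjoint_left]
        intro u hui huj
        have h1 := Finset.mem_filter.1 hui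
        have h2 := Finset.mem_filter.1 huj
        exact hne (huniq ((hXmem u).1 (hD.1 h1.1)) h1.2 h2.2)
      calc ∑ j, gOn G ((↑(P j) : Set V) \ {x}) ≤ ∑ j, (F j).card :=
            Finset.sum_le_sum (fun j _ => gOn_le G (hFdom j))
        _ = D.card := by rw [hDeq, Finset.card_biUnion hFdisj]
        _ = gOn G (↑(({x} : Finset V)ᶜ) : Set V) := hDcard
  -- F2 : gamma G = gOn (G − x) + 1
  have hγx' : gOn G (↑(({x} : Finset V)ᶜ) : Set V) < gamma G := by
    rwa [gamma_induce] at hγx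
  have hgamma : gamma G = gOn G (↑(({x} : Finset V)ᶜ) : Set V) + 1 := by
    have hle : gamma G ≤ gOn G (↑(({x} : Finset V)ᶜ) : Set V) + 1 := by
      obtain ⟨D, hD, hDcard⟩ := gOn_exists G (↑(({x} : Finset V)ᶜ) : Set V)
      have hxD : x ∉ D := fun hc => ((hXmem x).1 (hD.1 hc)) rfl
      have hdom : ∀ v, v ∉ insert x D → ∃ u ∈ insert x D, G.Adj u v := by
        intro v hv
        have hvx : v ≠ x := fun hc => hv (hc ▸ Finset.mem_insert_self x D)
        have hvD : v ∉ D := fun hc => hv (Finset.mem_insert_of_mem hc)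
        obtain ⟨u, huD, hadj⟩ := hD.2 v ((hXmem v).2 hvx) hvD
        exact ⟨u, Finset.mem_insert_of_mem huD, hadj⟩
      have := gamma_le G hdom
      rwa [Finset.card_insert_of_notMem hxD, hDcard] at this
    omega
  -- the union construction: a dominating set of G_i together with γ-sets of the G_j − x
  have union_dom : ∀ (i : Fin k) (D₀ : Finset V), DomOn G (↑(P i) : Set V) D₀ →
      (∀ v, v ∉ D₀ ∪ (Finset.univ.erase i).biUnion E →
          ∃ u ∈ D₀ ∪ (Finset.univ.erase i).biUnion E, G.Adj u v) ∧
        (D₀ ∪ (Finset.univ.erase i).biUnion E).card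
          = D₀.card + ∑ j ∈ Finset.univ.erase i, gOn G ((↑(P j) : Set V) \ {x}) := by
    intro i D₀ hD₀
    constructor
    · intro v hv
      by_cases hvi : v ∈ P i
      · have hvD₀ : v ∉ D₀ := fun hc => hv (Finset.mem_union_left _ hc)
        obtain ⟨u, huD, hadj⟩ := hD₀.2 v hvi hvD₀
        exact ⟨u, Finset.mem_union_left _ huD, hadj⟩
      · have hvx : v ≠ x := fun hc => hvi (hc ▸ hx i)
        obtain ⟨j, hvj⟩ := hcover v
        have hji : j ≠ i := fun hc => hvi (hc ▸ hvj)
        have hvB : v ∈ ((↑(P j) : Set V) \ {x}) := (hBmem j v).2 ⟨hvj, hvx⟩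
        have hvE : v ∉ E j := fun hc => hv (Finset.mem_union_right _
          (Finset.mem_biUnion.2 ⟨j, Finset.mem_erase.2 ⟨hji, Finset.mem_univ j⟩, hc⟩))
        obtain ⟨u, huE, hadj⟩ := (hE j).2 v hvB hvE
        exact ⟨u, Finset.mem_union_right _
          (Finset.mem_biUnion.2 ⟨j, Finset.mem_erase.2 ⟨hji, Finset.mem_univ j⟩, huE⟩), hadj⟩
    · have hdisj : Disjoint D₀ ((Finset.univ.erase i).biUnion E) := by
        rw [Finset.disjoint_left]
        intro u hu hu'
        obtain ⟨j, hj, huj⟩ := Finset.mem_biUnion.1 hu'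
        have hji : j ≠ i := (Finset.mem_erase.1 hj).1
        have h2 := (hBmem j u).1 ((hE j).1 huj)
        have h1 : u ∈ P i := hD₀.1 hu
        exact h2.2 (Finset.mem_singleton.1 (by
          rw [← hpair j i hji]; exact Finset.mem_inter.2 ⟨h2.1, h1⟩))
      rw [Finset.card_union_of_disjoint hdisj,
        Finset.card_biUnion (fun a _ b _ hne => hEdisj a b hne),
        Finset.sum_congr rfl (fun j _ => hEcard j)]
  -- γ(G) ≤ γ(G_i) + Σ_{j≠i} γ(G_j − x)
  have hle : ∀ i : Fin k, gamma G ≤ gOn G (↑(P i) : Set V)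
      + ∑ j ∈ Finset.univ.erase i, gOn G ((↑(P j) : Set V) \ {x}) := by
    intro i
    obtain ⟨D₀, hD₀, hD₀card⟩ := gOn_exists G (↑(P i) : Set V)
    have h := union_dom i D₀ hD₀
    have := gamma_le G h.1
    rw [h.2, hD₀card] at this
    exact this
  -- γ(G_i) = γ(G_i − x) + 1
  have hab : ∀ i : Fin k, gOn G (↑(P i) : Set V) = gOn G ((↑(P i) : Set V) \ {x}) + 1 := by
    intro i
    have h1 : gOn G (↑(P i) : Set V) ≤ gOn G ((↑(P i) : Set V) \ {x}) + 1 := by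
      have hxE : x ∉ E i := fun hc => ((hBmem i x).1 ((hE i).1 hc)).2 rfl
      have hdom : DomOn G (↑(P i) : Set V) (insert x (E i)) := by
        constructor
        · intro u hu
          rcases Finset.mem_insert.1 hu with h | h
          · subst h; exact hx i
          · exact ((hBmem i u).1 ((hE i).1 h)).1
        · intro v hv hvD
          have hvx : v ≠ x := fun hc => hvD (hc ▸ Finset.mem_insert_self x (E i))
          have hvE : v ∉ E i := fun hc => hvD (Finset.mem_insert_of_mem hc)
          obtain ⟨u, huE, hadj⟩ := (hE i).2 v ((hBmem i v).2 ⟨hv, hvx⟩) hvE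
          exact ⟨u, Finset.mem_insert_of_mem huE, hadj⟩
      have := gOn_le G hdom
      rwa [Finset.card_insert_of_notMem hxE, hEcard i] at this
    have hsplit : gOn G ((↑(P i) : Set V) \ {x})
        + ∑ j ∈ Finset.univ.erase i, gOn G ((↑(P j) : Set V) \ {x})
        = ∑ j, gOn G ((↑(P j) : Set V) \ {x}) :=
      Finset.add_sum_erase _ (fun j => gOn G ((↑(P j) : Set V) \ {x})) (Finset.mem_univ i)
    have h2 := hle i
    omega
  -- the key extension lemma: any γ-set of G_i extends to a γ-set of G
  have key : ∀ (i : Fin k) (D₀ : Finset V), DomOn G (↑(P i) : Set V) D₀ →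
      D₀.card = gOn G (↑(P i) : Set V) → ∃ D : Finset V, IsGammaSet G D ∧ D₀ ⊆ D := by
    intro i D₀ hD₀ hD₀card
    have h := union_dom i D₀ hD₀
    refine ⟨D₀ ∪ (Finset.univ.erase i).biUnion E, ⟨h.1, ?_⟩, Finset.subset_union_left⟩
    have hsplit : gOn G ((↑(P i) : Set V) \ {x})
        + ∑ j ∈ Finset.univ.erase i, gOn G ((↑(P j) : Set V) \ {x})
        = ∑ j, gOn G ((↑(P j) : Set V) \ {x}) :=
      Finset.add_sum_erase _ (fun j => gOn G ((↑(P j) : Set V) \ {x})) (Finset.mem_univ i)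
    have hai := hab i
    rw [h.2, hD₀card]
    omega
  -- walks in an induced subgraph avoiding x stay in one block
  have hwalk : ∀ (Bs : Set V), x ∉ Bs → ∀ (i : Fin k) (a c : ↥Bs),
      (G.induce Bs).Reachable a c → (↑a : V) ∈ P i → (↑c : V) ∈ P i := by
    intro Bs hxB i a c hr
    obtain ⟨p⟩ := hr
    induction p with
    | nil => exact id
    | @cons a' b' c' hadj p ih =>
      intro ha
      apply ih
      obtain ⟨l, hal, hbl⟩ := hedges _ _ hadj
      have hax : (a' : V) ≠ x := fun hc => hxB (hc ▸ a'.2)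
      exact huniq hax hal ha ▸ hbl
  -- every induced copy of H lies in a single block
  have hbl : ∀ S : Set V, (H ≃g G.induce S) → ∃ i, S ⊆ (↑(P i) : Set V) := by
    intro S iso
    by_cases hS1 : ∃ v ∈ S, v ≠ x
    · obtain ⟨v, hvS, hvx⟩ := hS1
      obtain ⟨i, hvi⟩ := hcover v
      refine ⟨i, fun u huS => ?_⟩
      by_cases hux : u = x
      · subst hux; exact hx i
      · by_cases hxS : x ∈ S
        · -- remove x; use that H has no cut vertex
          set w₀ : W := iso.symm ⟨x, hxS⟩ with hw₀
          have hfmem : ∀ w : ↥({w₀}ᶜ : Set W), ((iso w.1 : ↥S) : V) ∈ S \ {x} := by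
            intro w
            refine ⟨(iso w.1).2, fun he => w.2 ?_⟩
            have h1 : (iso w.1 : ↥S) = ⟨x, hxS⟩ := Subtype.ext he
            have h2 : iso.symm (iso w.1) = iso.symm ⟨x, hxS⟩ := congrArg iso.symm h1
            rw [iso.symm_apply_apply] at h2
            simpa [hw₀] using h2
          let f : ↥({w₀}ᶜ : Set W) → ↥(S \ {x}) := fun w => ⟨(iso w.1 : ↥S), hfmem w⟩
          have fhom : ∀ a b : ↥({w₀}ᶜ : Set W), (H.induce ({w₀}ᶜ : Set W)).Adj a b →
              (G.induce (S \ {x})).Adj (f a) (f b) := by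
            intro a b hab
            have h1 : H.Adj a.1 b.1 := hab
            have h2 : (G.induce S).Adj (iso a.1) (iso b.1) := iso.map_rel_iff.2 h1
            exact h2
          let fHom : H.induce ({w₀}ᶜ : Set W) →g G.induce (S \ {x}) :=
            ⟨f, fun {a b} h => fhom a b h⟩
          have hwu : iso.symm ⟨u, huS⟩ ∈ ({w₀} : Set W)ᶜ := by
            intro hc
            have : iso (iso.symm ⟨u, huS⟩) = iso w₀ := congrArg iso hc
            rw [iso.apply_symm_apply, hw₀, iso.apply_symm_apply] at this
            exact hux (congrArg Subtype.val this)
          have hwv : iso.symm ⟨v, hvS⟩ ∈ ({w₀} : Set W)ᶜ := by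
            intro hc
            have : iso (iso.symm ⟨v, hvS⟩) = iso w₀ := congrArg iso hc
            rw [iso.apply_symm_apply, hw₀, iso.apply_symm_apply] at this
            exact hvx (congrArg Subtype.val this)
          have hr0 := hHnocut w₀ ⟨iso.symm ⟨v, hvS⟩, hwv⟩ ⟨iso.symm ⟨u, huS⟩, hwu⟩
          have hr := hr0.map fHom
          have hfv : ((fHom ⟨iso.symm ⟨v, hvS⟩, hwv⟩ : ↥(S \ {x})) : V) = v := by
            show ((iso (iso.symm ⟨v, hvS⟩) : ↥S) : V) = v
            rw [iso.apply_symm_apply]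
          have hfu : ((fHom ⟨iso.symm ⟨u, huS⟩, hwu⟩ : ↥(S \ {x})) : V) = u := by
            show ((iso (iso.symm ⟨u, huS⟩) : ↥S) : V) = u
            rw [iso.apply_symm_apply]
          have hxB : x ∉ S \ {x} := fun hc => hc.2 rfl
          have := hwalk (S \ {x}) hxB i _ _ hr (by rw [hfv]; exact hvi)
          rw [hfu] at this
          exact this
        · -- x ∉ S : use connectivity of H directly
          have hr : (G.induce S).Reachable ⟨v, hvS⟩ ⟨u, huS⟩ := by
            have h0 := hHconn.preconnected (iso.symm ⟨v, hvS⟩) (iso.symm ⟨u, huS⟩)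
            have h2 := h0.map iso.toHom
            simpa using h2
          exact hwalk S hxS i _ _ hr hvi
    · push_neg at hS1
      refine ⟨⟨0, hk⟩, fun u huS => ?_⟩
      rw [hS1 u huS]
      exact hx _
  constructor
  · -- every vertex is in a copy of H inside a γ-set
    intro v₀
    obtain ⟨i, hv₀i⟩ := hcover v₀
    obtain ⟨S', hv₀S', ⟨iso'⟩, D', hD'γ, hS'D'⟩ := (hexc i).1 ⟨v₀, hv₀i⟩
    have hlift := lift_gammaSet G hD'γ
    rw [gamma_induce] at hlift
    obtain ⟨D, hDγ, hsub⟩ := key i _ hlift.1 hlift.2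
    refine ⟨Subtype.val '' S', ⟨⟨v₀, hv₀i⟩, hv₀S', rfl⟩,
      ⟨iso'.trans (induceInduceIso G _ S')⟩, D, hDγ, ?_⟩
    rintro u ⟨u', hu'S', rfl⟩
    exact hsub (mem_map_subtype.2 ⟨u'.2, hS'D' hu'S'⟩)
  · -- every copy of H extends to a γ-set
    intro S hiso
    obtain ⟨iso⟩ := hiso
    obtain ⟨i, hSA⟩ := hbl S iso
    set S' : Set ↥(↑(P i) : Set V) := Subtype.val ⁻¹' S with hS'def
    have himg : Subtype.val '' S' = S := by
      rw [hS'def, Subtype.image_preimage_coe]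
      exact Set.inter_eq_self_of_subset_right hSA
    have hii := induceInduceIso G (↑(P i) : Set V) S'
    rw [himg] at hii
    obtain ⟨D', hD'γ, hS'D'⟩ := (hexc i).2 S' ⟨iso.trans hii.symm⟩
    have hlift := lift_gammaSet G hD'γ
    rw [gamma_induce] at hlift
    obtain ⟨D, hDγ, hsub⟩ := key i _ hlift.1 hlift.2
    refine ⟨D, hDγ, fun u huS => ?_⟩
    exact hsub (mem_map_subtype.2 ⟨hSA huS, hS'D' huS⟩)
end

section
/- Let G be a connected graph, x ∈ V(G) with γ(G − x) < γ(G), and let xy and xz be two distinct bridges of G. Then no minimum dominating set of G contains both y and z. -/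
section helpers

variable {V : Type*} [Fintype V]

lemma gamma_le_card (G : SimpleGraph V) (A : Finset V)
    (h : ∀ v : V, v ∉ A → ∃ u ∈ A, G.Adj u v) : gamma G ≤ A.card :=
  Nat.sInf_le ⟨A, rfl, h⟩

lemma gamma_exists_s17 (G : SimpleGraph V) :
    ∃ D : Finset V, D.card = gamma G ∧ ∀ v : V, v ∉ D → ∃ u ∈ D, G.Adj u v := by
  have hne : {k | ∃ D : Finset V, D.card = k ∧ ∀ v : V, v ∉ D → ∃ u ∈ D, G.Adj u v}.Nonempty :=
    ⟨Finset.univ.card, Finset.univ, rfl, fun v hv => absurd (Finset.mem_univ v) hv⟩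
  exact Nat.sInf_mem hne

variable [DecidableEq V]

lemma gammaX_le (G : SimpleGraph V) (x : V) (A : Finset V) (hxA : x ∉ A)
    (h : ∀ w : V, w ≠ x → w ∉ A → ∃ u ∈ A, G.Adj u w) :
    gamma (G.induce (↑(({x} : Finset V)ᶜ) : Set V)) ≤ A.card := by
  classical
  set s : Set V := (↑(({x} : Finset V)ᶜ) : Set V) with hs
  have hmem : ∀ w : V, w ∈ s ↔ w ≠ x := by
    intro w; simp [hs]
  set A' : Finset s := A.subtype (· ∈ s) with hA'
  have hcard : A'.card = A.card := by
    rw [hA', Finset.card_subtype, Finset.filter_true_of_mem]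
    intro a ha
    exact (hmem a).2 (fun hax => hxA (hax ▸ ha))
  rw [← hcard]
  apply gamma_le_card
  rintro ⟨v, hv⟩ hv'
  have hvx : v ≠ x := (hmem v).1 hv
  have hvA : v ∉ A := fun hvA => hv' (Finset.mem_subtype.2 hvA)
  obtain ⟨u, huA, hadj⟩ := h v hvx hvA
  have hus : u ∈ s := (hmem u).2 (fun hux => hxA (hux ▸ huA))
  exact ⟨⟨u, hus⟩, Finset.mem_subtype.2 huA, hadj⟩

lemma gammaX_exists (G : SimpleGraph V) (x : V) :
    ∃ S : Finset V, x ∉ S ∧ S.card = gamma (G.induce (↑(({x} : Finset V)ᶜ) : Set V)) ∧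
      ∀ w : V, w ≠ x → w ∉ S → ∃ u ∈ S, u ≠ x ∧ G.Adj u w := by
  classical
  set s : Set V := (↑(({x} : Finset V)ᶜ) : Set V) with hs
  have hmem : ∀ w : V, w ∈ s ↔ w ≠ x := by
    intro w; simp [hs]
  obtain ⟨D', hcard, hdom⟩ := gamma_exists_s17 (G.induce s)
  refine ⟨D'.image Subtype.val, ?_, ?_, ?_⟩
  · intro hx
    obtain ⟨⟨u, hu⟩, _, heq⟩ := Finset.mem_image.1 hx
    exact (hmem _).1 hu heq
  · rw [Finset.card_image_of_injective _ Subtype.val_injective, hcard]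
  · intro w hwx hwS
    have hw : w ∈ s := (hmem w).2 hwx
    have : (⟨w, hw⟩ : s) ∉ D' := fun hmem' =>
      hwS (Finset.mem_image.2 ⟨⟨w, hw⟩, hmem', rfl⟩)
    obtain ⟨⟨u, hu⟩, huD, hadj⟩ := hdom ⟨w, hw⟩ this
    exact ⟨u, Finset.mem_image.2 ⟨⟨u, hu⟩, huD, rfl⟩, (hmem u).1 hu, hadj⟩

end helpers

/-- If `G` is connected, `γ(G − x) < γ(G)`, and `xy`, `xz` are two distinct bridges, then no
minimum dominating set of `G` contains both `y` and `z`. -/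
theorem two_bridges_not_both_in_gamma_set {V : Type*} [Fintype V] [DecidableEq V]
    (G : SimpleGraph V) (hconn : G.Connected) (x y z : V) (hyz : y ≠ z)
    (hγx : gamma (G.induce (↑(({x} : Finset V)ᶜ) : Set V)) < gamma G)
    (hbridge₁ : G.IsBridge s(x, y)) (hbridge₂ : G.IsBridge s(x, z)) :
    ∀ D : Finset V, IsGammaSet G D → ¬ (y ∈ D ∧ z ∈ D) := by
  classical
  rintro D ⟨hDdom, hDcard⟩ ⟨hyD, hzD⟩
  obtain ⟨hadj₁, hreach₁⟩ : G.Adj x y ∧ ¬ (G \ SimpleGraph.fromEdgeSet {s(x, y)}).Reachable x y :=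
    ⟨hbridge₁.reachable_iff_adj.1 (hconn.preconnected x y), SimpleGraph.isBridge_iff.1 hbridge₁⟩
  obtain ⟨hadj₂, hreach₂⟩ : G.Adj x z ∧ ¬ (G \ SimpleGraph.fromEdgeSet {s(x, z)}).Reachable x z :=
    ⟨hbridge₂.reachable_iff_adj.1 (hconn.preconnected x z), SimpleGraph.isBridge_iff.1 hbridge₂⟩
  have hxy : x ≠ y := hadj₁.ne
  have hxz : x ≠ z := hadj₂.ne
  set H : SimpleGraph V := G.deleteEdges {s(x, y), s(x, z)} with hH
  -- `H` is contained in both bridge-deleted graphs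
  have hle₁ : H ≤ G \ SimpleGraph.fromEdgeSet {s(x, y)} := by
    intro a b hab
    rw [SimpleGraph.deleteEdges_adj] at hab
    rw [SimpleGraph.sdiff_adj, SimpleGraph.fromEdgeSet_adj]
    refine ⟨hab.1, fun h => hab.2 ?_⟩
    have := Set.mem_singleton_iff.1 h.1
    rw [this]
    exact Set.mem_insert _ _
  have hle₂ : H ≤ G \ SimpleGraph.fromEdgeSet {s(x, z)} := by
    intro a b hab
    rw [SimpleGraph.deleteEdges_adj] at hab
    rw [SimpleGraph.sdiff_adj, SimpleGraph.fromEdgeSet_adj]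
    refine ⟨hab.1, fun h => hab.2 ?_⟩
    have := Set.mem_singleton_iff.1 h.1
    rw [this]
    exact Set.mem_insert_of_mem _ rfl
  set Py : V → Prop := fun w => H.Reachable y w with hPy
  set Pz : V → Prop := fun w => H.Reachable z w with hPz
  have hPyy : Py y := SimpleGraph.Reachable.refl y
  have hPzz : Pz z := SimpleGraph.Reachable.refl z
  have hPyx : ¬ Py x := fun h => hreach₁ ((h.mono hle₁).symm)
  have hPzx : ¬ Pz x := fun h => hreach₂ ((h.mono hle₂).symm)
  have hPyz : ¬ Py z := by
    intro h
    apply hreach₁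
    have h1 : (G \ SimpleGraph.fromEdgeSet {s(x, y)}).Reachable y z := h.mono hle₁
    have h2 : (G \ SimpleGraph.fromEdgeSet {s(x, y)}).Adj z x := by
      rw [SimpleGraph.sdiff_adj, SimpleGraph.fromEdgeSet_adj]
      refine ⟨hadj₂.symm, ?_⟩
      rintro ⟨he, -⟩
      rw [Set.mem_singleton_iff, Sym2.eq_iff] at he
      rcases he with ⟨h1', h2'⟩ | ⟨h1', h2'⟩
      · exact hxz h1'.symm
      · exact hyz h1'.symm
    exact (h1.trans h2.reachable).symm
  have hPzy : ¬ Pz y := by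
    intro h
    apply hreach₂
    have h1 : (G \ SimpleGraph.fromEdgeSet {s(x, z)}).Reachable z y := h.mono hle₂
    have h2 : (G \ SimpleGraph.fromEdgeSet {s(x, z)}).Adj y x := by
      rw [SimpleGraph.sdiff_adj, SimpleGraph.fromEdgeSet_adj]
      refine ⟨hadj₁.symm, ?_⟩
      rintro ⟨he, -⟩
      rw [Set.mem_singleton_iff, Sym2.eq_iff] at he
      rcases he with ⟨h1', h2'⟩ | ⟨h1', h2'⟩
      · exact hxy h1'.symm
      · exact hyz h1'
    exact (h1.trans h2.reachable).symm
  have hdisj : ∀ w, Py w → Pz w → False := fun w h1 h2 => hPyz (h1.trans h2.symm)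
  -- crossing lemmas
  have cross_y : ∀ u w, Py u → ¬ Py w → G.Adj u w → u = y ∧ w = x := by
    intro u w hu hw hadj
    by_cases h1 : s(u, w) = s(x, y)
    · rw [Sym2.eq_iff] at h1
      rcases h1 with ⟨rfl, rfl⟩ | ⟨rfl, rfl⟩
      · exact absurd hu hPyx
      · exact ⟨rfl, rfl⟩
    · by_cases h2 : s(u, w) = s(x, z)
      · rw [Sym2.eq_iff] at h2
        rcases h2 with ⟨rfl, rfl⟩ | ⟨rfl, rfl⟩
        · exact absurd hu hPyx
        · exact absurd hu hPyz
      · exfalso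
        apply hw
        refine hu.trans (SimpleGraph.Adj.reachable ?_)
        rw [hH, SimpleGraph.deleteEdges_adj]
        exact ⟨hadj, by simp [h1, h2]⟩
  have cross_z : ∀ u w, Pz u → ¬ Pz w → G.Adj u w → u = z ∧ w = x := by
    intro u w hu hw hadj
    by_cases h1 : s(u, w) = s(x, z)
    · rw [Sym2.eq_iff] at h1
      rcases h1 with ⟨rfl, rfl⟩ | ⟨rfl, rfl⟩
      · exact absurd hu hPzx
      · exact ⟨rfl, rfl⟩
    · by_cases h2 : s(u, w) = s(x, y)
      · rw [Sym2.eq_iff] at h2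
        rcases h2 with ⟨rfl, rfl⟩ | ⟨rfl, rfl⟩
        · exact absurd hu hPzx
        · exact absurd hu hPzy
      · exfalso
        apply hw
        refine hu.trans (SimpleGraph.Adj.reachable ?_)
        rw [hH, SimpleGraph.deleteEdges_adj]
        exact ⟨hadj, by simp [h1, h2]⟩
  -- the minimum dominating set of G - x
  obtain ⟨S, hxS, hScard, hSdom⟩ := gammaX_exists G x
  set g : ℕ := gamma G with hg
  set s : ℕ := gamma (G.induce (↑(({x} : Finset V)ᶜ) : Set V)) with hsdef
  have hsg : s < g := hγx
  set Dy : Finset V := D.filter Py with hDy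
  set Dz : Finset V := D.filter Pz with hDz
  set Sy : Finset V := S.filter Py with hSy
  set Sz : Finset V := S.filter Pz with hSz
  have hyDy : y ∈ Dy := Finset.mem_filter.2 ⟨hyD, hPyy⟩
  have hzDz : z ∈ Dz := Finset.mem_filter.2 ⟨hzD, hPzz⟩
  -- U_y := Dy ∪ (S \ Sy) dominates G
  have hUy : gamma G ≤ (Dy ∪ (S \ Sy)).card := by
    apply gamma_le_card
    intro v hv
    rcases eq_or_ne v x with rfl | hvx
    · exact ⟨y, Finset.mem_union_left _ hyDy, hadj₁.symm⟩
    by_cases hPyv : Py v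
    · have hvD : v ∉ D := by
        intro hvD
        exact hv (Finset.mem_union_left _ (Finset.mem_filter.2 ⟨hvD, hPyv⟩))
      obtain ⟨u, huD, hadj⟩ := hDdom v hvD
      by_cases hPyu : Py u
      · exact ⟨u, Finset.mem_union_left _ (Finset.mem_filter.2 ⟨huD, hPyu⟩), hadj⟩
      · have h1 := (cross_y v u hPyv hPyu hadj.symm).1
        rw [h1] at hv
        exact absurd (Finset.mem_union_left _ hyDy) hv
    · have hvS : v ∉ S := by
        intro hvS
        exact hv (Finset.mem_union_right _
          (Finset.mem_sdiff.2 ⟨hvS, fun h => hPyv (Finset.mem_filter.1 h).2⟩))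
      obtain ⟨u, huS, hux, hadj⟩ := hSdom v hvx hvS
      by_cases hPyu : Py u
      · exact absurd (cross_y u v hPyu hPyv hadj).2 hvx
      · exact ⟨u, Finset.mem_union_right _
          (Finset.mem_sdiff.2 ⟨huS, fun h => hPyu (Finset.mem_filter.1 h).2⟩), hadj⟩
  have hUz : gamma G ≤ (Dz ∪ (S \ Sz)).card := by
    apply gamma_le_card
    intro v hv
    rcases eq_or_ne v x with rfl | hvx
    · exact ⟨z, Finset.mem_union_left _ hzDz, hadj₂.symm⟩
    by_cases hPzv : Pz v
    · have hvD : v ∉ D := by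
        intro hvD
        exact hv (Finset.mem_union_left _ (Finset.mem_filter.2 ⟨hvD, hPzv⟩))
      obtain ⟨u, huD, hadj⟩ := hDdom v hvD
      by_cases hPzu : Pz u
      · exact ⟨u, Finset.mem_union_left _ (Finset.mem_filter.2 ⟨huD, hPzu⟩), hadj⟩
      · have h1 := (cross_z v u hPzv hPzu hadj.symm).1
        rw [h1] at hv
        exact absurd (Finset.mem_union_left _ hzDz) hv
    · have hvS : v ∉ S := by
        intro hvS
        exact hv (Finset.mem_union_right _
          (Finset.mem_sdiff.2 ⟨hvS, fun h => hPzv (Finset.mem_filter.1 h).2⟩))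
      obtain ⟨u, huS, hux, hadj⟩ := hSdom v hvx hvS
      by_cases hPzu : Pz u
      · exact absurd (cross_z u v hPzu hPzv hadj).2 hvx
      · exact ⟨u, Finset.mem_union_right _
          (Finset.mem_sdiff.2 ⟨huS, fun h => hPzu (Finset.mem_filter.1 h).2⟩), hadj⟩
  -- T := Sy ∪ Sz ∪ (D \ (Dy ∪ Dz)) dominates every vertex other than x
  set T : Finset V := Sy ∪ Sz ∪ (D \ (Dy ∪ Dz)) with hT
  have hTdom : ∀ v : V, v ≠ x → v ∉ T → ∃ u ∈ T, G.Adj u v := by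
    intro v hvx hvT
    by_cases hPyv : Py v
    · have hvS : v ∉ S := by
        intro hvS
        exact hvT (Finset.mem_union_left _ (Finset.mem_union_left _
          (Finset.mem_filter.2 ⟨hvS, hPyv⟩)))
      obtain ⟨u, huS, hux, hadj⟩ := hSdom v hvx hvS
      by_cases hPyu : Py u
      · exact ⟨u, Finset.mem_union_left _ (Finset.mem_union_left _
          (Finset.mem_filter.2 ⟨huS, hPyu⟩)), hadj⟩
      · exact absurd (cross_y v u hPyv hPyu hadj.symm).2 hux
    · by_cases hPzv : Pz v
      · have hvS : v ∉ S := by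
          intro hvS
          exact hvT (Finset.mem_union_left _ (Finset.mem_union_right _
            (Finset.mem_filter.2 ⟨hvS, hPzv⟩)))
        obtain ⟨u, huS, hux, hadj⟩ := hSdom v hvx hvS
        by_cases hPzu : Pz u
        · exact ⟨u, Finset.mem_union_left _ (Finset.mem_union_right _
            (Finset.mem_filter.2 ⟨huS, hPzu⟩)), hadj⟩
        · exact absurd (cross_z v u hPzv hPzu hadj.symm).2 hux
      · have hvD : v ∉ D := by
          intro hvD
          refine hvT (Finset.mem_union_right _ (Finset.mem_sdiff.2 ⟨hvD, ?_⟩))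
          intro h
          rcases Finset.mem_union.1 h with h' | h'
          · exact hPyv (Finset.mem_filter.1 h').2
          · exact hPzv (Finset.mem_filter.1 h').2
        obtain ⟨u, huD, hadj⟩ := hDdom v hvD
        by_cases hPyu : Py u
        · exact absurd (cross_y u v hPyu hPyv hadj).2 hvx
        · by_cases hPzu : Pz u
          · exact absurd (cross_z u v hPzu hPzv hadj).2 hvx
          · refine ⟨u, Finset.mem_union_right _ (Finset.mem_sdiff.2 ⟨huD, ?_⟩), hadj⟩
            intro h
            rcases Finset.mem_union.1 h with h' | h'
            · exact hPyu (Finset.mem_filter.1 h').2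
            · exact hPzu (Finset.mem_filter.1 h').2
  -- cardinality bookkeeping
  have hDyD : Dy ∪ Dz ⊆ D := by
    intro u hu
    rcases Finset.mem_union.1 hu with h | h
    · exact (Finset.mem_filter.1 h).1
    · exact (Finset.mem_filter.1 h).1
  have hdisjF : Disjoint Dy Dz := by
    rw [Finset.disjoint_left]
    intro u h1 h2
    exact hdisj u (Finset.mem_filter.1 h1).2 (Finset.mem_filter.1 h2).2
  have hcardDyDz : (Dy ∪ Dz).card = Dy.card + Dz.card := Finset.card_union_of_disjoint hdisjF
  have hab_le : Dy.card + Dz.card ≤ D.card := by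
    rw [← hcardDyDz]; exact Finset.card_le_card hDyD
  have hcardDsd : (D \ (Dy ∪ Dz)).card = D.card - (Dy.card + Dz.card) := by
    rw [Finset.card_sdiff_of_subset hDyD, hcardDyDz]
  have hSyS : Sy ⊆ S := Finset.filter_subset _ _
  have hSzS : Sz ⊆ S := Finset.filter_subset _ _
  have ha'_le : Sy.card ≤ S.card := Finset.card_le_card hSyS
  have hb'_le : Sz.card ≤ S.card := Finset.card_le_card hSzS
  have hcardSy : (S \ Sy).card = S.card - Sy.card := Finset.card_sdiff_of_subset hSyS
  have hcardSz : (S \ Sz).card = S.card - Sz.card := Finset.card_sdiff_of_subset hSzS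
  have hUy' : g ≤ Dy.card + (S.card - Sy.card) := by
    refine le_trans hUy (le_trans (Finset.card_union_le _ _) ?_)
    rw [hcardSy]
  have hUz' : g ≤ Dz.card + (S.card - Sz.card) := by
    refine le_trans hUz (le_trans (Finset.card_union_le _ _) ?_)
    rw [hcardSz]
  have hTcard : T.card ≤ Sy.card + Sz.card + (D.card - (Dy.card + Dz.card)) := by
    rw [hT, ← hcardDsd]
    calc (Sy ∪ Sz ∪ (D \ (Dy ∪ Dz))).card
        ≤ (Sy ∪ Sz).card + (D \ (Dy ∪ Dz)).card := Finset.card_union_le _ _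
      _ ≤ Sy.card + Sz.card + (D \ (Dy ∪ Dz)).card := by
          exact Nat.add_le_add_right (Finset.card_union_le _ _) _
  have hDg : D.card = g := hDcard
  have hSs : S.card = s := hScard
  by_cases hxD : x ∈ D
  · -- here T dominates all of G, since x ∈ T
    have hxT : x ∈ T := Finset.mem_union_right _ (Finset.mem_sdiff.2 ⟨hxD, by
      intro h
      rcases Finset.mem_union.1 h with h' | h'
      · exact hPyx (Finset.mem_filter.1 h').2
      · exact hPzx (Finset.mem_filter.1 h').2⟩)
    have hgT : g ≤ T.card := by
      apply gamma_le_card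
      intro v hv
      rcases eq_or_ne v x with rfl | hvx
      · exact absurd hxT hv
      · exact hTdom v hvx hv
    have := le_trans hgT hTcard
    omega
  · have hxT : x ∉ T := by
      intro h
      rcases Finset.mem_union.1 h with h' | h'
      · rcases Finset.mem_union.1 h' with h'' | h''
        · exact hxS (hSyS h'')
        · exact hxS (hSzS h'')
      · exact hxD (Finset.mem_sdiff.1 h').1
    have hsT : s ≤ T.card := by
      rw [hsdef]
      exact gammaX_le G x T hxT hTdom
    have := le_trans hsT hTcard
    omega
end
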